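/- Let X be a topological space, x ∈ X, and let H be a subgroup of π₁(X, x). Then the H-quasi-small loop set π_H^qs(X, x) is a subgroup of π₁(X, x). -/

import Mathlib

open unitInterval

noncomputable section

attribute [local instance] Path.Homotopic.setoid

variable {X Y : Type*} [TopologicalSpace X] [TopologicalSpace Y]

/-- `HClose f g` : the path `f` is homotopically close to the path `g` rel `∂I`:
for every partition `0 = t₀ < t₁ < ⋯ < tₙ = 1` and every sequence of open sets
`U₁, …, Uₙ` with `g [tᵢ₋₁, tᵢ] ⊆ Uᵢ`, there is a path `γ`, homotopic to `f` rel `∂I`,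
with `γ [tᵢ₋₁, tᵢ] ⊆ Uᵢ` and `γ tᵢ = g tᵢ` for all `i`. -/
def HClose {a b : X} (f g : Path a b) : Prop :=
  ∀ (n : ℕ) (t : Fin (n + 1) → I), t 0 = 0 → t (Fin.last n) = 1 → StrictMono t →
    ∀ U : Fin n → Set X, (∀ i, IsOpen (U i)) →
      (∀ i : Fin n, g '' Set.Icc (t i.castSucc) (t i.succ) ⊆ U i) →
      ∃ γ : Path a b,
        (∀ i : Fin n, γ '' Set.Icc (t i.castSucc) (t i.succ) ⊆ U i) ∧
        (∀ i : Fin (n + 1), γ (t i) = g (t i)) ∧ γ.Homotopic f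

/-- The class of a loop at `x` as an element of the fundamental group. -/
def pathClass {x : X} (f : Path x x) : FundamentalGroup X x :=
  FundamentalGroup.fromPath ⟦f⟧

/-- The `H`-quasi-small loop set `π_H^qs(X, x)`. -/
def qsSet (x : X) (H : Set (FundamentalGroup X x)) : Set (FundamentalGroup X x) :=
  { p | ∃ f h : Path x x, pathClass f = p ∧ pathClass h ∈ H ∧ HClose f h }

/-- The quasi-small loop group `π₁^qs(X, x)`. -/
def qs (x : X) : Set (FundamentalGroup X x) :=
  qsSet x (⊥ : Subgroup (FundamentalGroup X x))

/-- The Spanier group of `(X, x)` with respect to the cover `𝒰`. -/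
def spanierCover (x : X) (𝒰 : Set (Set X)) : Subgroup (FundamentalGroup X x) :=
  Subgroup.closure { p | ∃ (y : X) (u : Path x y) (v : Path y y) (U : Set X),
    U ∈ 𝒰 ∧ Set.range v ⊆ U ∧ p = pathClass ((u.trans v).trans u.symm) }

/-- The (unbased) Spanier group `π₁^sp(X, x)`. -/
def spanierGroup (x : X) : Subgroup (FundamentalGroup X x) :=
  ⨅ (𝒰 : Set (Set X)) (_ : ∀ U ∈ 𝒰, IsOpen U) (_ : ⋃₀ 𝒰 = Set.univ), spanierCover x 𝒰

/-- The small generated subgroup `π₁^sg(X, x)`. -/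
def smallGenerated (x : X) : Subgroup (FundamentalGroup X x) :=
  Subgroup.closure { p | ∃ (y : X) (β : Path x y) (α : Path y y),
    HClose α (Path.refl y) ∧ p = pathClass ((β.trans α).trans β.symm) }

/-- `X` is homotopically path Hausdorff relative to `H ⊆ π₁(X, x)`. -/
def HPHausdorffRel (x : X) (H : Set (FundamentalGroup X x)) : Prop :=
  ∀ (y : X) (α β : Path x y), pathClass (α.trans β.symm) ∉ H →
    ∃ (n : ℕ) (t : Fin (n + 1) → I), t 0 = 0 ∧ t (Fin.last n) = 1 ∧ StrictMono t ∧
      ∃ U : Fin n → Set X, (∀ i, IsOpen (U i)) ∧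
        (∀ i : Fin n, α '' Set.Icc (t i.castSucc) (t i.succ) ⊆ U i) ∧
        ∀ γ : Path x y, (∀ i : Fin n, γ '' Set.Icc (t i.castSucc) (t i.succ) ⊆ U i) →
          (∀ i : Fin (n + 1), γ (t i) = α (t i)) → pathClass (γ.trans β.symm) ∉ H

/-!
Closeness rel `∂I` is reflexive and is preserved by reversing paths (reverse the partition) and by
concatenating them, so `π_H^qs(X, x)` inherits closure under `1`, products and inverses from `H`.
For a concatenation `g₁.trans g₂`, a partition of `[0, 1]` is pulled back to each factor; the
pulled-back partition may repeat points, which are deleted before closeness is applied. The second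
factor is treated as the first factor of the reversed concatenation.
-/

open Set

namespace unitInterval

def stretchLeft (s : I) : I := projIcc 0 1 zero_le_one (2 * (s : ℝ))

theorem monotone_stretchLeft : Monotone stretchLeft := fun _ _ hss' =>
  monotone_projIcc _ (mul_le_mul_of_nonneg_left (Subtype.mono_coe _ hss') zero_le_two)

@[simp]
theorem stretchLeft_zero : stretchLeft 0 = 0 := by
  simp [stretchLeft]

@[simp]
theorem stretchLeft_one : stretchLeft 1 = 1 := by
  simp [stretchLeft]

theorem Icc_stretchLeft_subset {a b : I} (ha : (a : ℝ) < 1 / 2) :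
    Icc (stretchLeft a) (stretchLeft b) ⊆ stretchLeft '' (Icc a b ∩ {w | (w : ℝ) ≤ 1 / 2}) := by
  rintro z ⟨hz₁, hz₂⟩
  have ha' : 2 * (a : ℝ) ≤ z := by
    rwa [stretchLeft, projIcc_of_mem _ ⟨by linarith [a.2.1], by linarith⟩, ← Subtype.coe_le_coe]
      at hz₁
  have hb' : (z : ℝ) ≤ 2 * b :=
    (Subtype.coe_le_coe.2 hz₂).trans (max_le (mul_nonneg zero_le_two b.2.1) (min_le_right _ _))
  refine ⟨⟨z / 2, by linarith [z.2.1], by linarith [z.2.2]⟩,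
    ⟨⟨?_, ?_⟩, show (z : ℝ) / 2 ≤ 1 / 2 by linarith [z.2.2]⟩, ?_⟩
  · show (a : ℝ) ≤ z / 2
    linarith
  · show (z : ℝ) / 2 ≤ b
    linarith
  · ext
    simp [stretchLeft, mul_div_cancel₀ (z : ℝ) two_ne_zero]

end unitInterval

namespace Path

variable {a b c : X}

def IsSubordinate {n : ℕ} (γ : Path a b) (t : Fin (n + 1) → I) (U : Fin n → Set X) : Prop :=
  ∀ i : Fin n, γ '' Icc (t i.castSucc) (t i.succ) ⊆ U i

theorem trans_apply_of_le_half (γ₁ : Path a b) (γ₂ : Path b c) {s : I} (hs : (s : ℝ) ≤ 1 / 2) :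
    (γ₁.trans γ₂) s = γ₁ (stretchLeft s) := by
  rw [← extend_extends', extend_trans_of_le_half _ _ hs]
  rfl

theorem trans_apply_eq_of_half_le (γ₁ γ₁' : Path a b) (γ₂ : Path b c) {s : I}
    (hs : 1 / 2 ≤ (s : ℝ)) : (γ₁.trans γ₂) s = (γ₁'.trans γ₂) s := by
  rw [← extend_extends', ← extend_extends', extend_trans_of_half_le _ _ hs,
    extend_trans_of_half_le _ _ hs]

end Path

section Partition

variable {n : ℕ}

def reversePartition (t : Fin (n + 1) → I) : Fin (n + 1) → I := fun i => σ (t i.rev)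

@[simp]
theorem reversePartition_reversePartition (t : Fin (n + 1) → I) :
    reversePartition (reversePartition t) = t := by
  ext i
  simp [reversePartition]

theorem reversePartition_zero {t : Fin (n + 1) → I} (ht : t (Fin.last n) = 1) :
    reversePartition t 0 = 0 := by
  simp [reversePartition, ht]

theorem reversePartition_last {t : Fin (n + 1) → I} (ht : t 0 = 0) :
    reversePartition t (Fin.last n) = 1 := by
  simp [reversePartition, ht]

theorem StrictMono.reversePartition {t : Fin (n + 1) → I} (ht : StrictMono t) :
    StrictMono (reversePartition t) :=
  fun _ _ hij => symm_lt_symm.2 (ht (Fin.rev_lt_rev.2 hij))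

theorem Path.IsSubordinate.symm {a b : X} {γ : Path a b} {t : Fin (n + 1) → I}
    {U : Fin n → Set X} (hγ : γ.IsSubordinate t U) :
    γ.symm.IsSubordinate (reversePartition t) (U ∘ Fin.rev) := by
  rintro i _ ⟨z, ⟨hz₁, hz₂⟩, rfl⟩
  refine hγ i.rev ⟨σ z, ⟨?_, ?_⟩, rfl⟩
  · rw [← Fin.rev_succ]
    exact le_symm_comm.1 hz₂
  · rw [← Fin.rev_castSucc]
    exact symm_le_comm.1 hz₁

/-- Deleting a repeated point `t j.succ = t j.castSucc` from a partition removes the `j`-th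
interval and keeps the others. -/
theorem apply_succ_succAbove_castSucc {α : Type*} {t : Fin (n + 2) → α} {j : Fin (n + 1)}
    (hj : t j.castSucc = t j.succ) (m : Fin n) :
    t (j.succ.succAbove m.castSucc) = t (j.succAbove m).castSucc := by
  rcases lt_trichotomy m.castSucc j with hlt | rfl | hgt
  · rw [Fin.succAbove_of_castSucc_lt _ _ (Fin.castSucc_lt_succ_iff.2 hlt.le),
      Fin.succAbove_of_castSucc_lt _ _ hlt]
  · rw [Fin.succAbove_of_castSucc_lt _ _ Fin.castSucc_lt_succ,
      Fin.succAbove_of_le_castSucc _ _ le_rfl, ← Fin.succ_castSucc, hj]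
  · rw [Fin.succAbove_of_le_castSucc _ _ (Fin.succ_le_castSucc_iff.2 hgt),
      Fin.succAbove_of_le_castSucc _ _ hgt.le, Fin.succ_castSucc]

theorem exists_apply_succ_succAbove_eq {α : Type*} {t : Fin (n + 2) → α} {j : Fin (n + 1)}
    (hj : t j.castSucc = t j.succ) (i : Fin (n + 2)) : ∃ m, t (j.succ.succAbove m) = t i := by
  by_cases hij : i = j.succ
  · obtain ⟨m, hm⟩ := Fin.exists_succAbove_eq (Fin.castSucc_lt_succ (i := j)).ne
    exact ⟨m, by rw [hm, hj, hij]⟩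
  · obtain ⟨m, hm⟩ := Fin.exists_succAbove_eq hij
    exact ⟨m, by rw [hm]⟩

end Partition

namespace HClose

variable {a b c : X}

protected theorem refl (g : Path a b) : HClose g g :=
  fun _ _ _ _ _ _ _ hgU => ⟨g, hgU, fun _ => rfl, Path.Homotopic.refl g⟩

protected theorem symm {f g : Path a b} (h : HClose f g) : HClose f.symm g.symm := by
  intro n t ht0 ht1 ht U hU hgU
  have hg : g.IsSubordinate (reversePartition t) (U ∘ Fin.rev) := by
    simpa using Path.IsSubordinate.symm (γ := g.symm) hgU
  obtain ⟨γ, hγU, hγg, hγf⟩ := h n (reversePartition t) (reversePartition_zero ht1)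
    (reversePartition_last ht0) ht.reversePartition _ (fun i => hU _) hg
  refine ⟨γ.symm, ?_, fun i => ?_, hγf.symm₂⟩
  · have hγU' := Path.IsSubordinate.symm hγU
    simp only [reversePartition_reversePartition, Function.comp_def, Fin.rev_rev] at hγU'
    exact hγU'
  · simpa [reversePartition] using hγg i.rev

theorem exists_of_monotone {f g : Path a b} (h : HClose f g) {n : ℕ} {t : Fin (n + 1) → I}
    (ht0 : t 0 = 0) (ht1 : t (Fin.last n) = 1) (ht : Monotone t) {U : Fin n → Set X}
    (hU : ∀ i, IsOpen (U i)) (hg : g.IsSubordinate t U) :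
    ∃ γ : Path a b, γ.IsSubordinate t U ∧ (∀ i, γ (t i) = g (t i)) ∧ γ.Homotopic f := by
  induction n with
  | zero => exact absurd (ht0.symm.trans ht1) zero_ne_one
  | succ n ih =>
    by_cases hst : StrictMono t
    · exact h _ t ht0 ht1 hst U hU hg
    obtain ⟨j, hj⟩ : ∃ j : Fin (n + 1), t j.castSucc = t j.succ := by
      simp only [Fin.strictMono_iff_lt_succ, not_forall, not_lt] at hst
      obtain ⟨j, hj⟩ := hst
      exact ⟨j, (ht Fin.castSucc_lt_succ.le).antisymm hj⟩
    set t' := t ∘ j.succ.succAbove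
    have ht' : Monotone t' := ht.comp (Fin.strictMono_succAbove _).monotone
    have ht'0 : t' 0 = 0 := by
      obtain ⟨m, hm⟩ := exists_apply_succ_succAbove_eq hj 0
      exact le_antisymm (ht0 ▸ hm ▸ ht' (Fin.zero_le m)) bot_le
    have ht'1 : t' (Fin.last n) = 1 := by
      obtain ⟨m, hm⟩ := exists_apply_succ_succAbove_eq hj (Fin.last _)
      exact le_antisymm le_one' (ht1 ▸ hm ▸ ht' (Fin.le_last m))
    have hg' : g.IsSubordinate t' (U ∘ j.succAbove) := fun m => by
      simpa [t', apply_succ_succAbove_castSucc hj, Fin.succ_succAbove_succ] using hg (j.succAbove m)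
    obtain ⟨γ, hγU, hγg, hγf⟩ := ih ht'0 ht'1 ht' (fun _ => hU _) hg'
    have hγg' : ∀ i, γ (t i) = g (t i) := fun i => by
      obtain ⟨m, hm⟩ := exists_apply_succ_succAbove_eq hj i
      exact hm ▸ hγg m
    refine ⟨γ, fun i => ?_, hγg', hγf⟩
    by_cases hij : i = j
    · -- the `j`-th interval is the single point `t j`, where `γ` agrees with `g`
      subst hij
      rw [← hj, Icc_self, image_singleton, hγg']
      exact singleton_subset_iff.2 (image_subset_iff.1 (hg i) ⟨le_rfl, hj.le⟩)
    · obtain ⟨m, rfl⟩ := Fin.exists_succAbove_eq hij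
      simpa [t', apply_succ_succAbove_castSucc hj, Fin.succ_succAbove_succ] using hγU m

/-- The partition is pulled back to the first factor by `stretchLeft`; intervals lying in the
second half then impose no constraint on it. -/
theorem exists_trans_left {f₁ g₁ : Path a b} (h : HClose f₁ g₁) (g₂ : Path b c) {n : ℕ}
    {t : Fin (n + 1) → I} (ht0 : t 0 = 0) (ht1 : t (Fin.last n) = 1) (ht : Monotone t)
    {U : Fin n → Set X} (hU : ∀ i, IsOpen (U i)) (hg : (g₁.trans g₂).IsSubordinate t U) :
    ∃ γ : Path a b, (γ.trans g₂).IsSubordinate t U ∧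
      (∀ i, (γ.trans g₂) (t i) = (g₁.trans g₂) (t i)) ∧ γ.Homotopic f₁ := by
  set V : Fin n → Set X := fun i => if (t i.castSucc : ℝ) < 1 / 2 then U i else univ
  have hg₁ : g₁.IsSubordinate (stretchLeft ∘ t) V := by
    intro i
    by_cases hi : (t i.castSucc : ℝ) < 1 / 2
    · simp only [V, if_pos hi, Function.comp_apply]
      calc g₁ '' Icc (stretchLeft (t i.castSucc)) (stretchLeft (t i.succ))
          ⊆ g₁ '' (stretchLeft '' (Icc (t i.castSucc) (t i.succ) ∩ {w | (w : ℝ) ≤ 1 / 2})) :=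
            image_mono (Icc_stretchLeft_subset hi)
        _ = (g₁.trans g₂) '' (Icc (t i.castSucc) (t i.succ) ∩ {w | (w : ℝ) ≤ 1 / 2}) := by
            rw [image_image]
            exact image_congr fun w hw => (Path.trans_apply_of_le_half _ _ hw.2).symm
        _ ⊆ U i := (image_mono inter_subset_left).trans (hg i)
    · simp only [V, if_neg hi, subset_univ]
  obtain ⟨γ, hγV, hγg, hγf⟩ := h.exists_of_monotone (by simp [ht0])
    (by simp [ht1]) (monotone_stretchLeft.comp ht)
    (fun i => by dsimp only [V]; split_ifs; exacts [hU i, isOpen_univ]) hg₁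
  have hagree : ∀ i, (γ.trans g₂) (t i) = (g₁.trans g₂) (t i) := fun i => by
    rcases le_total (t i : ℝ) (1 / 2) with hi | hi
    · rw [Path.trans_apply_of_le_half _ _ hi, Path.trans_apply_of_le_half _ _ hi]
      exact hγg i
    · exact Path.trans_apply_eq_of_half_le _ _ _ hi
  refine ⟨γ, ?_, hagree, hγf⟩
  rintro i _ ⟨z, hz, rfl⟩
  rcases le_or_gt (z : ℝ) (1 / 2) with hz2 | hz2
  · by_cases hi : (t i.castSucc : ℝ) < 1 / 2
    · rw [Path.trans_apply_of_le_half _ _ hz2]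
      have hγz := hγV i ⟨stretchLeft z, ⟨monotone_stretchLeft hz.1, monotone_stretchLeft hz.2⟩, rfl⟩
      simp only [V, if_pos hi] at hγz
      exact hγz
    · -- then `z = t i.castSucc = 1 / 2`, a partition point
      obtain rfl : z = t i.castSucc := le_antisymm (hz2.trans (not_lt.1 hi)) hz.1
      rw [hagree]
      exact hg i ⟨_, ⟨le_rfl, hz.1.trans hz.2⟩, rfl⟩
  · rw [Path.trans_apply_eq_of_half_le _ g₁ _ hz2.le]
    exact hg i ⟨z, hz, rfl⟩

protected theorem trans {f₁ g₁ : Path a b} {f₂ g₂ : Path b c} (h₁ : HClose f₁ g₁)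
    (h₂ : HClose f₂ g₂) : HClose (f₁.trans f₂) (g₁.trans g₂) := by
  intro n t ht0 ht1 ht U hU hg
  obtain ⟨γ₁, hγ₁U, hγ₁g, hγ₁f⟩ := h₁.exists_trans_left g₂ ht0 ht1 ht.monotone hU hg
  -- the second factor is the first factor of the reversed path
  have hrev : (g₂.symm.trans γ₁.symm).IsSubordinate (reversePartition t) (U ∘ Fin.rev) := by
    simpa using Path.IsSubordinate.symm hγ₁U
  obtain ⟨γ₂, hγ₂U, hγ₂g, hγ₂f⟩ := h₂.symm.exists_trans_left γ₁.symm (reversePartition_zero ht1)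
    (reversePartition_last ht0) ht.reversePartition.monotone (fun _ => hU _) hrev
  refine ⟨γ₁.trans γ₂.symm, ?_, fun i => ?_, hγ₁f.hcomp (by simpa using hγ₂f.symm₂)⟩
  · have hγU := Path.IsSubordinate.symm hγ₂U
    simp only [Path.trans_symm, Path.symm_symm, reversePartition_reversePartition,
      Function.comp_def, Fin.rev_rev] at hγU
    exact hγU
  · calc (γ₁.trans γ₂.symm) (t i) = (γ₂.trans γ₁.symm).symm (t i) := by simp
      _ = (g₂.symm.trans γ₁.symm).symm (t i) := by
        simpa only [Path.symm_apply, Function.comp_apply, reversePartition, Fin.rev_rev] using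
          hγ₂g i.rev
      _ = (γ₁.trans g₂) (t i) := by simp
      _ = (g₁.trans g₂) (t i) := hγ₁g i

end HClose

theorem pathClass_refl (x : X) : pathClass (Path.refl x) = 1 :=
  rfl

theorem pathClass_trans {x : X} (f g : Path x x) :
    pathClass (f.trans g) = pathClass g * pathClass f :=
  rfl

theorem pathClass_symm {x : X} (f : Path x x) : pathClass f.symm = (pathClass f)⁻¹ :=
  rfl

/-- if `H` is a subgroup of `π₁(X, x)`, then `π_H^qs(X, x)` is a
subgroup of `π₁(X, x)`. -/
theorem stmt4 (x : X) (H : Subgroup (FundamentalGroup X x)) :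
    ∃ S : Subgroup (FundamentalGroup X x), (S : Set (FundamentalGroup X x)) = qsSet x ↑H := by
  refine ⟨{ carrier := qsSet x H, mul_mem' := ?_, one_mem' := ?_, inv_mem' := ?_ }, rfl⟩
  · rintro _ _ ⟨f₁, g₁, rfl, hg₁, hfg₁⟩ ⟨f₂, g₂, rfl, hg₂, hfg₂⟩
    exact ⟨f₂.trans f₁, g₂.trans g₁, pathClass_trans f₂ f₁,
      pathClass_trans g₂ g₁ ▸ H.mul_mem hg₁ hg₂, hfg₂.trans hfg₁⟩
  · exact ⟨.refl x, .refl x, pathClass_refl x, pathClass_refl x ▸ H.one_mem, .refl _⟩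
  · rintro _ ⟨f, g, rfl, hg, hfg⟩
    exact ⟨f.symm, g.symm, pathClass_symm f, pathClass_symm g ▸ H.inv_mem hg, hfg.symm⟩
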